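/- Let W ∈ ℝⁿ with σ₁(W) > 0 and σ₂(W) ≥ 0, and let U ∈ ℝⁿ be arbitrary. If σ₁(U) ≠ 0, then setting V = U − (σ₁(U)/σ₁(W))·W, one has σ₁(V) = 0 and hence σ₂(V,V) ≤ 0, which expands to the inequality: −σ₂(U,U) ≥ −2·σ₁(U)·σ₂(U,W)/σ₁(W) + σ₁(U)²·σ₂(W,W)/σ₁(W)². -/

import Mathlib

open Finset

/-- First elementary symmetric polynomial. -/
def sigma1 {n : ℕ} (κ : Fin n → ℝ) : ℝ := ∑ i, κ i

/-- Second elementary symmetric polynomial. -/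
def sigma2 {n : ℕ} (κ : Fin n → ℝ) : ℝ :=
  ∑ p ∈ Finset.univ.filter (fun p : Fin n × Fin n => p.1 < p.2), κ p.1 * κ p.2

/-- Third elementary symmetric polynomial. -/
def sigma3 {n : ℕ} (κ : Fin n → ℝ) : ℝ :=
  ∑ p ∈ Finset.univ.filter
      (fun p : Fin n × Fin n × Fin n => p.1 < p.2.1 ∧ p.2.1 < p.2.2),
    κ p.1 * κ p.2.1 * κ p.2.2

/-- Polarized form of `2 * sigma2` : `Q x y = ∑_{i ≠ j} x i * y j`. -/
def polarQ {n : ℕ} (x y : Fin n → ℝ) : ℝ :=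
  ∑ p ∈ Finset.univ.offDiag, x p.1 * y p.2

/-!
Since `polarQ x y = σ₁(x) σ₁(y) - ⟨x, y⟩`, the form `polarQ x x` is `-‖x‖² ≤ 0` on the hyperplane
`σ₁ = 0`. The vector `V = U - (σ₁(U)/σ₁(W)) W` lies on that hyperplane, and expanding `polarQ V V`
by bilinearity gives the inequality.
-/

theorem polarQ_eq_sigma1_mul_sub {n : ℕ} (x y : Fin n → ℝ) :
    polarQ x y = sigma1 x * sigma1 y - ∑ i, x i * y i := by
  have hdiag : ∑ p ∈ (univ : Finset (Fin n)).diag, x p.1 * y p.2 = ∑ i, x i * y i :=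
    sum_diag univ fun p => x p.1 * y p.2
  rw [polarQ, sigma1, sigma1, sum_mul_sum, ← sum_product',
    ← diag_union_offDiag, sum_union (disjoint_diag_offDiag _), hdiag]
  ring

theorem polarQ_self_nonpos_of_sigma1_eq_zero {n : ℕ} {x : Fin n → ℝ} (hx : sigma1 x = 0) :
    polarQ x x ≤ 0 := by
  rw [polarQ_eq_sigma1_mul_sub, hx, zero_mul, zero_sub, neg_nonpos]
  exact sum_nonneg fun i _ => mul_self_nonneg (x i)

theorem sigma1_sub_const_mul {n : ℕ} (x y : Fin n → ℝ) (c : ℝ) :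
    sigma1 (fun i => x i - c * y i) = sigma1 x - c * sigma1 y := by
  simp only [sigma1, sum_sub_distrib, mul_sum]

theorem polarQ_sub_const_mul_self {n : ℕ} (x y : Fin n → ℝ) (c : ℝ) :
    polarQ (fun i => x i - c * y i) (fun i => x i - c * y i)
      = polarQ x x - 2 * c * polarQ x y + c ^ 2 * polarQ y y := by
  have hdiag : ∑ i, (x i - c * y i) * (x i - c * y i)
      = ∑ i, x i * x i - 2 * c * ∑ i, x i * y i + c ^ 2 * ∑ i, y i * y i := by
    simp only [mul_sum, ← sum_sub_distrib, ← sum_add_distrib]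
    exact sum_congr rfl fun i _ => by ring
  simp only [polarQ_eq_sigma1_mul_sub, sigma1_sub_const_mul, hdiag]
  ring

theorem stmt2_general {n : ℕ} (W U : Fin n → ℝ)
    (hW1 : 0 < sigma1 W) :
    sigma1 (fun i => U i - (sigma1 U / sigma1 W) * W i) = 0 ∧
    polarQ (fun i => U i - (sigma1 U / sigma1 W) * W i)
      (fun i => U i - (sigma1 U / sigma1 W) * W i) ≤ 0 ∧
    -polarQ U U ≥ -2 * sigma1 U * polarQ U W / sigma1 W
      + (sigma1 U)^2 * polarQ W W / (sigma1 W)^2 := by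
  have hV1 : sigma1 (fun i => U i - (sigma1 U / sigma1 W) * W i) = 0 := by
    rw [sigma1_sub_const_mul, div_mul_cancel₀ _ hW1.ne', sub_self]
  have hV2 := polarQ_self_nonpos_of_sigma1_eq_zero hV1
  refine ⟨hV1, hV2, ?_⟩
  rw [polarQ_sub_const_mul_self, div_pow] at hV2
  have hrhs : -2 * sigma1 U * polarQ U W / sigma1 W + (sigma1 U)^2 * polarQ W W / (sigma1 W)^2
      = -(2 * (sigma1 U / sigma1 W) * polarQ U W) + sigma1 U ^ 2 / sigma1 W ^ 2 * polarQ W W := by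
    ring
  linarith

/-- First inequality of Lemma 2.1: with `V = U - (σ₁(U)/σ₁(W)) W`,
one has `σ₁(V) = 0`, hence `σ₂(V,V) ≤ 0`, which expands to the stated inequality. -/
theorem stmt2 {n : ℕ} (W U : Fin n → ℝ)
    (hW1 : 0 < sigma1 W) (hW2 : 0 ≤ sigma2 W) (hU : sigma1 U ≠ 0) :
    sigma1 (fun i => U i - (sigma1 U / sigma1 W) * W i) = 0 ∧
    polarQ (fun i => U i - (sigma1 U / sigma1 W) * W i)
      (fun i => U i - (sigma1 U / sigma1 W) * W i) ≤ 0 ∧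
    -polarQ U U ≥ -2 * sigma1 U * polarQ U W / sigma1 W
      + (sigma1 U)^2 * polarQ W W / (sigma1 W)^2 :=
  stmt2_general W U hW1
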